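/- arXiv:1009.5403 — 2 statements merged into one kernel-verified Lean document; each statement's English description precedes it below -/
import Mathlib

section
/- Suppose p : [0,∞) → (0,1] is log-concave with p(0)=1, and l : (0,∞) → (0,∞) is differentiable with x·l'(x) < l(x) for all x > 0. Fix A > 0 and define t_A(x) = (A/x − 1)·l(x), f_A(x) = A / t_A(x) for x ∈ (0,A), and s_A(x) = p(x)^{A/x}. Then s_A ∘ f_A⁻¹ is a non-increasing function of the average rate r̄ = f_A(x): i.e., if f_A(x₁) ≤ f_A(x₂) then s_A(x₁) ≥ s_A(x₂). -/
/-!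
Inelasticity `x l' < l` makes the total time `(A/x - 1) l(x)` strictly decreasing in the increment
`x`, so the average rate `f_A` is strictly increasing and `f_A x₁ ≤ f_A x₂` forces `x₁ ≤ x₂`.
Since `log p` is concave with `log p 0 = 0`, its slope from the origin `log p x / x` is
antitone, hence so is `s_A x = exp (A · log p x / x)`.
-/

open Set

lemma ConcaveOn.antitoneOn_div_self {g : ℝ → ℝ} (hg : ConcaveOn ℝ (Ici 0) g) (hg0 : g 0 = 0) :
    AntitoneOn (fun x => g x / x) (Ioi 0) := by
  intro x hx y hy hxy
  have hslope := hg.antitoneOn_slope_gt (x := 0) self_mem_Ici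
    ⟨mem_Ici.2 (le_of_lt hx), hx⟩ ⟨mem_Ici.2 (le_of_lt hy), hy⟩ hxy
  simpa only [slope_def_field, hg0, sub_zero] using hslope

lemma strictAntiOn_div_sub_one_mul {l l' : ℝ → ℝ} {A : ℝ}
    (hl : ∀ x ∈ Ioo 0 A, HasDerivAt l (l' x) x) (hlpos : ∀ x ∈ Ioo 0 A, 0 < l x)
    (hinel : ∀ x ∈ Ioo 0 A, x * l' x < l x) :
    StrictAntiOn (fun x => (A / x - 1) * l x) (Ioo 0 A) := by
  have hderiv : ∀ x ∈ Ioo 0 A,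
      HasDerivAt (fun x => (A / x - 1) * l x) (-A / x ^ 2 * l x + (A / x - 1) * l' x) x := by
    intro x hx
    have hinv : HasDerivAt (fun x : ℝ => A / x - 1) (-A / x ^ 2) x := by
      simpa [div_eq_mul_inv, neg_div] using
        ((hasDerivAt_inv hx.1.ne').const_mul A).sub_const 1
    exact hinv.mul (hl x hx)
  refine strictAntiOn_of_hasDerivWithinAt_neg (convex_Ioo 0 A)
    (fun x hx => (hderiv x hx).continuousAt.continuousWithinAt)
    (fun x hx => (hderiv x (interior_subset hx)).hasDerivWithinAt) ?_
  rw [interior_Ioo]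
  rintro x ⟨hx0, hxA⟩
  have hlx := hlpos x ⟨hx0, hxA⟩
  -- `(A - x) x l' < (A - x) l < A l`
  have hnum : (A - x) * (x * l' x) - A * l x < 0 := by
    nlinarith [mul_lt_mul_of_pos_left (hinel x ⟨hx0, hxA⟩) (sub_pos.2 hxA)]
  have heq : -A / x ^ 2 * l x + (A / x - 1) * l' x = ((A - x) * (x * l' x) - A * l x) / x ^ 2 := by
    field_simp
    ring
  rw [heq]
  exact div_neg_of_neg_of_pos hnum (by positivity)

theorem stmt_7_general (p : ℝ → ℝ) (hp0 : p 0 = 1)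
    (hppos : ∀ x ≥ 0, 0 < p x)
    (hconc : ConcaveOn ℝ (Set.Ici 0) (fun x => Real.log (p x)))
    (l l' : ℝ → ℝ) (hl : ∀ x > 0, HasDerivAt l (l' x) x)
    (hlpos : ∀ x > 0, 0 < l x) (hinel : ∀ x > 0, x * l' x < l x)
    (A : ℝ) :
    ∀ x₁ ∈ Set.Ioo 0 A, ∀ x₂ ∈ Set.Ioo 0 A,
      A / ((A / x₁ - 1) * l x₁) ≤ A / ((A / x₂ - 1) * l x₂) →
      p x₂ ^ (A / x₂) ≤ p x₁ ^ (A / x₁) := by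
  intro x₁ hx₁ x₂ hx₂ hf
  have hA : 0 < A := hx₁.1.trans hx₁.2
  have htime_pos : ∀ x ∈ Ioo 0 A, 0 < (A / x - 1) * l x := fun x hx =>
    mul_pos (sub_pos.2 ((one_lt_div hx.1).2 hx.2)) (hlpos x hx.1)
  have hx₁₂ : x₁ ≤ x₂ := by
    rw [div_le_div_iff_of_pos_left hA (htime_pos x₁ hx₁) (htime_pos x₂ hx₂)] at hf
    exact ((strictAntiOn_div_sub_one_mul (fun x hx => hl x hx.1) (fun x hx => hlpos x hx.1)
      (fun x hx => hinel x hx.1)).le_iff_ge hx₂ hx₁).1 hf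
  have hslope := hconc.antitoneOn_div_self (by simp [hp0]) hx₁.1 hx₂.1 hx₁₂
  rw [Real.rpow_def_of_pos (hppos x₂ hx₂.1.le), Real.rpow_def_of_pos (hppos x₁ hx₁.1.le)]
  refine Real.exp_le_exp.2 ?_
  calc Real.log (p x₂) * (A / x₂) = A * (Real.log (p x₂) / x₂) := by ring
    _ ≤ A * (Real.log (p x₁) / x₁) := mul_le_mul_of_nonneg_left hslope hA.le
    _ = Real.log (p x₁) * (A / x₁) := by ring

theorem stmt_7 (p : ℝ → ℝ) (hp0 : p 0 = 1)
    (hppos : ∀ x ≥ 0, 0 < p x) (hple : ∀ x ≥ 0, p x ≤ 1)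
    (hconc : ConcaveOn ℝ (Set.Ici 0) (fun x => Real.log (p x)))
    (l l' : ℝ → ℝ) (hl : ∀ x > 0, HasDerivAt l (l' x) x)
    (hlpos : ∀ x > 0, 0 < l x) (hinel : ∀ x > 0, x * l' x < l x)
    (A : ℝ) (hA : 0 < A) :
    ∀ x₁ ∈ Set.Ioo 0 A, ∀ x₂ ∈ Set.Ioo 0 A,
      A / ((A / x₁ - 1) * l x₁) ≤ A / ((A / x₂ - 1) * l x₂) →
      p x₂ ^ (A / x₂) ≤ p x₁ ^ (A / x₁) :=
  stmt_7_general p hp0 hppos hconc l l' hl hlpos hinel A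
end

section
/- Let p(x) ∈ (0,1) be fixed and r : [0,∞) → (0,∞) be log-concave. Fix x > 0 and δ ∈ (0,1), and define Π(z) = Σ_{i=1}^{z−1} δ^{i−1} p^i r(i·x) + (δ^{z−1}/(1−δ)) p^z r(z·x) for positive integers z. Then Π(z+1) − Π(z) = (δ^z/(1−δ)) p^z (p·r((z+1)x) − r(z·x)); consequently Π is unimodal in z and is maximized at z*(x) = min{ z ∈ ℕ⁺ : r(z·x)/r((z+1)·x) ≥ p }. -/
/-!
Telescoping gives `Π(z+1) - Π(z)` as a positive multiple of `p r((z+1)x) - r(zx)`, whose sign is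
that of `p - r(zx)/r((z+1)x)`. Log-concavity of `r` makes this ratio non-decreasing in `z`, so `Π`
rises up to `z*` and falls from there on.
-/

open Set

/-- The paper's `Π(z)` is `discountedPayoff δ (fun n => p ^ n * r (n * x)) z`. -/
noncomputable def discountedPayoff (δ : ℝ) (a : ℕ → ℝ) (z : ℕ) : ℝ :=
  (∑ i ∈ Finset.range (z - 1), δ ^ i * a (i + 1)) + δ ^ (z - 1) / (1 - δ) * a z

theorem discountedPayoff_succ_sub {δ : ℝ} (hδ : δ ≠ 1) (a : ℕ → ℝ) {z : ℕ} (hz : 1 ≤ z) :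
    discountedPayoff δ a (z + 1) - discountedPayoff δ a z =
      δ ^ z / (1 - δ) * (a (z + 1) - a z) := by
  obtain ⟨m, rfl⟩ := Nat.exists_eq_add_of_le' hz
  have h1δ : 1 - δ ≠ 0 := sub_ne_zero.2 hδ.symm
  simp only [discountedPayoff, Nat.add_sub_cancel, Finset.sum_range_succ]
  field_simp
  ring

theorem ConcaveOn.monotone_sub_succ_mul {f : ℝ → ℝ} (hf : ConcaveOn ℝ (Ici 0) f) {x : ℝ}
    (hx : 0 < x) : Monotone fun n : ℕ => f (n * x) - f ((n + 1) * x) := by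
  refine monotone_nat_of_le_succ fun n => ?_
  have hslope := hf.slope_anti_adjacent (x := n * x) (y := (n + 1) * x) (z := (n + 2) * x)
    (by simp only [mem_Ici]; positivity) (by simp only [mem_Ici]; positivity)
    (by nlinarith) (by nlinarith)
  have h1 : ((n : ℝ) + 2) * x - (n + 1) * x = x := by ring
  have h2 : ((n : ℝ) + 1) * x - n * x = x := by ring
  rw [h1, h2, div_le_div_iff_of_pos_right hx] at hslope
  push_cast
  rw [show ((n : ℝ) + 1 + 1) = n + 2 by ring]
  linarith

theorem monotone_div_succ_mul_of_concaveOn_log {r : ℝ → ℝ} (hr : ∀ t ≥ 0, 0 < r t)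
    (hlog : ConcaveOn ℝ (Ici 0) fun t => Real.log (r t)) {x : ℝ} (hx : 0 < x) :
    Monotone fun n : ℕ => r (n * x) / r ((n + 1) * x) := by
  have hratio : ∀ n : ℕ, r (n * x) / r ((n + 1) * x) =
      Real.exp (Real.log (r (n * x)) - Real.log (r ((n + 1) * x))) := fun n => by
    rw [Real.exp_sub, Real.exp_log (hr _ (by positivity)), Real.exp_log (hr _ (by positivity))]
  simp_rw [hratio]
  exact Real.exp_monotone.comp (hlog.monotone_sub_succ_mul hx)

theorem le_of_le_succ_of_succ_le {α : Type*} [Preorder α] {f : ℕ → α} {a m : ℕ}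
    (hup : ∀ n, a ≤ n → n < m → f n ≤ f (n + 1)) (hdown : ∀ n, m ≤ n → f (n + 1) ≤ f n)
    {z : ℕ} (hz : a ≤ z) : f z ≤ f m := by
  rcases le_total z m with hzm | hmz
  · refine monotoneOn_of_le_succ ordConnected_Icc (fun n _ hn hn1 => ?_)
      (mem_Icc.2 ⟨hz, hzm⟩) (mem_Icc.2 ⟨hz.trans hzm, le_rfl⟩) hzm
    rw [Order.succ_eq_add_one] at hn1 ⊢
    exact hup n hn.1 (Nat.lt_of_succ_le hn1.2)
  · exact antitoneOn_nat_Ici_of_succ_le hdown (le_refl m) hmz hmz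

theorem stmt_11 (p : ℝ) (hp : p ∈ Set.Ioo (0:ℝ) 1)
    (r : ℝ → ℝ) (hrpos : ∀ x ≥ 0, 0 < r x)
    (hrconc : ConcaveOn ℝ (Set.Ici 0) (fun x => Real.log (r x)))
    (x : ℝ) (hx : 0 < x)
    (δ : ℝ) (hδ : δ ∈ Set.Ioo (0:ℝ) 1)
    (Pay : ℕ → ℝ)
    (hPay : ∀ z : ℕ, Pay z =
      (∑ i ∈ Finset.range (z - 1), δ ^ i * p ^ (i + 1) * r ((i + 1) * x)) +
        δ ^ (z - 1) / (1 - δ) * p ^ z * r (z * x))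
    (zstar : ℕ) (hzstar1 : 1 ≤ zstar)
    (hzstar : p ≤ r (zstar * x) / r ((zstar + 1) * x))
    (hzstarmin : ∀ z : ℕ, 1 ≤ z → z < zstar → r (z * x) / r ((z + 1) * x) < p) :
    (∀ z : ℕ, 1 ≤ z →
      Pay (z + 1) - Pay z = δ ^ z / (1 - δ) * p ^ z * (p * r ((z + 1) * x) - r (z * x))) ∧
    (∀ z : ℕ, 1 ≤ z → z < zstar → Pay z ≤ Pay (z + 1)) ∧
    (∀ z : ℕ, zstar ≤ z → Pay (z + 1) ≤ Pay z) ∧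
    (∀ z : ℕ, 1 ≤ z → Pay z ≤ Pay zstar) := by
  obtain ⟨hp0, -⟩ := hp
  obtain ⟨hδ0, hδ1⟩ := hδ
  have hPay' : Pay = discountedPayoff δ fun n => p ^ n * r (n * x) := by
    funext z
    simp only [hPay, discountedPayoff, Nat.cast_add, Nat.cast_one, mul_assoc]
  have hdiff (z : ℕ) (hz : 1 ≤ z) :
      Pay (z + 1) - Pay z = δ ^ z / (1 - δ) * p ^ z * (p * r ((z + 1) * x) - r (z * x)) := by
    rw [hPay', discountedPayoff_succ_sub hδ1.ne _ hz]
    push_cast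
    ring
  have hcoef (z : ℕ) : 0 < δ ^ z / (1 - δ) * p ^ z := by
    have : 0 < 1 - δ := by linarith
    positivity
  have hr (z : ℕ) : 0 < r ((z + 1) * x) := hrpos _ (by positivity)
  have hup (z : ℕ) (hz : 1 ≤ z) (hzs : z < zstar) : Pay z ≤ Pay (z + 1) := by
    have hlt : r (z * x) < p * r ((z + 1) * x) := (div_lt_iff₀ (hr z)).1 (hzstarmin z hz hzs)
    have := hdiff z hz
    nlinarith [hcoef z]
  have hdown (z : ℕ) (hz : zstar ≤ z) : Pay (z + 1) ≤ Pay z := by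
    have hratio := hzstar.trans (monotone_div_succ_mul_of_concaveOn_log hrpos hrconc hx hz)
    have hle : p * r ((z + 1) * x) ≤ r (z * x) := (le_div_iff₀ (hr z)).1 hratio
    have := hdiff z (hzstar1.trans hz)
    nlinarith [hcoef z]
  exact ⟨hdiff, hup, hdown, fun z hz => le_of_le_succ_of_succ_le hup hdown hz⟩
end
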